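/- Let f = Σ_{n≥0} aₙxⁿ be a convergent real formal power series and let u, b ∈ ℝ. If the improper Newton integral ∫_u^{+∞} f(x+b) exists (i.e., the Newton integral ∫_u^{w} f(x+b) tends to a finite limit L as w → +∞), then the improper Newton integral ∫_{u+b}^{+∞} f also exists and equals L; and conversely, if ∫_{u+b}^{+∞} f exists then ∫_u^{+∞} f(x+b) exists and the two are equal. -/

import Mathlib

/-!
Write `P(x) = Σ aₙ x^{n+1}/(n+1)` for the value of the formal primitive. The key identity is
that the primitive of the shift, evaluated at `v`, equals `P(v + b) - P(b)`: it is the double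
series `Σₙ Σₘ C(n+m, n) a_{n+m} bᵐ v^{n+1}/(n+1)` summed along the antidiagonals `n + m = k`,
where the binomial theorem gives `a_k ((v + b)^{k+1} - b^{k+1})/(k+1)`. The same identity for
`|a|, |b|, |v|` shows that the double series converges absolutely, which justifies the
rearrangement. Hence `∫_u^w f(x+b) = P(w + b) - P(u + b)` while `∫_{u+b}^w f = P(w) - P(u + b)`,
and `w ↦ w + b` maps `atTop` onto itself.
-/

open Filter Finset Topology

def IsConvergent (a : ℕ → ℝ) : Prop :=
  ∀ c : ℝ, Tendsto (fun n : ℕ => a n * c ^ n) atTop (𝓝 0)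

noncomputable def primitive (a : ℕ → ℝ) (x : ℝ) : ℝ :=
  ∑' n : ℕ, a n * x ^ (n + 1) / ((n : ℝ) + 1)

noncomputable def shiftCoeff (a : ℕ → ℝ) (b : ℝ) (n : ℕ) : ℝ :=
  ∑' m : ℕ, ((m + n).choose n : ℝ) * a (m + n) * b ^ m

noncomputable def shiftTerm (a : ℕ → ℝ) (b v : ℝ) (p : ℕ × ℕ) : ℝ :=
  ((p.1 + p.2).choose p.1 : ℝ) * a (p.1 + p.2) * b ^ p.2 * v ^ (p.1 + 1) / ((p.1 : ℝ) + 1)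

theorem Filter.tendsto_comp_add_atTop_iff {α β : Type*} [AddCommGroup α] [PartialOrder α]
    [IsOrderedAddMonoid α] [IsDirectedOrder α] {f : α → β} {l : Filter β} (k : α) :
    Tendsto (fun x => f (x + k)) atTop l ↔ Tendsto f atTop l := by
  nth_rw 2 [← map_add_atTop_eq k]
  rw [tendsto_map'_iff, Function.comp_def]

theorem summable_of_summable_sum_norm_antidiagonal {E : Type*} [NormedAddCommGroup E]
    [CompleteSpace E] {f : ℕ × ℕ → E} (h : Summable fun k => ∑ p ∈ antidiagonal k, ‖f p‖) :
    Summable f := by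
  refine Summable.of_norm ?_
  rw [← HasAntidiagonal.sigmaAntidiagonalEquivProd.summable_iff, Function.comp_def,
    summable_sigma_of_nonneg fun _ => norm_nonneg _]
  exact ⟨fun _ => .of_finite, h.congr fun k => (Finset.tsum_subtype _ fun p => ‖f p‖).symm⟩

theorem tsum_eq_tsum_sum_antidiagonal {E : Type*} [AddCommMonoid E] [TopologicalSpace E]
    [ContinuousAdd E] [T3Space E] {f : ℕ × ℕ → E} (hf : Summable f) :
    ∑' p, f p = ∑' k, ∑ p ∈ antidiagonal k, f p := by
  let e := HasAntidiagonal.sigmaAntidiagonalEquivProd (A := ℕ)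
  calc ∑' p, f p = ∑' c, (f ∘ e) c := (e.tsum_eq f).symm
    _ = ∑' (k : ℕ) (p : antidiagonal k), f p :=
        (e.summable_iff.mpr hf).tsum_sigma' fun _ => .of_finite
    _ = ∑' k, ∑ p ∈ antidiagonal k, f p := tsum_congr fun k => Finset.tsum_subtype _ f

theorem sum_antidiagonal_choose_mul_pow_div {K : Type*} [Field K] [CharZero K] (k : ℕ) (x y : K) :
    ∑ p ∈ antidiagonal k, (k.choose p.1 : K) * y ^ p.2 * x ^ (p.1 + 1) / ((p.1 : K) + 1)
      = ((x + y) ^ (k + 1) - y ^ (k + 1)) / ((k : K) + 1) := by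
  have hpow : (x + y) ^ (k + 1) - y ^ (k + 1)
      = ∑ i ∈ range (k + 1), x ^ (i + 1) * y ^ (k - i) * ((k + 1).choose (i + 1) : K) := by
    rw [add_pow, sum_range_succ', pow_zero, one_mul, Nat.sub_zero, Nat.choose_zero_right,
      Nat.cast_one, mul_one, add_sub_cancel_right]
    simp only [Nat.add_sub_add_right]
  rw [Nat.sum_antidiagonal_eq_sum_range_succ_mk, hpow, sum_div]
  refine sum_congr rfl fun i _ => ?_
  have hchoose : ((k : K) + 1) * k.choose i = (k + 1).choose (i + 1) * ((i : K) + 1) := by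
    exact_mod_cast Nat.add_one_mul_choose_eq k i
  field_simp [Nat.cast_add_one_ne_zero i, Nat.cast_add_one_ne_zero k]
  linear_combination y ^ (k - i) * x ^ (i + 1) * hchoose

section

variable {a : ℕ → ℝ}

theorem IsConvergent.abs (ha : IsConvergent a) : IsConvergent fun n => |a n| := fun c => by
  rw [tendsto_zero_iff_abs_tendsto_zero, Function.comp_def]
  simpa only [abs_mul, abs_abs, abs_zero] using (ha c).abs

theorem IsConvergent.summable_abs_mul_pow (ha : IsConvergent a) (r : ℝ) :
    Summable fun n => |a n| * |r| ^ n := by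
  obtain ⟨C, hC⟩ := (ha (2 * |r|)).abs.bddAbove_range
  refine .of_nonneg_of_le (fun n => by positivity) (fun n => ?_) (summable_geometric_two.mul_left C)
  calc |a n| * |r| ^ n = |a n * (2 * |r|) ^ n| * (1 / 2) ^ n := by
        rw [abs_mul, abs_pow, abs_of_nonneg (by positivity : 0 ≤ 2 * |r|), mul_assoc, ← mul_pow,
          show 2 * |r| * (1 / 2) = |r| by ring]
    _ ≤ C * (1 / 2) ^ n := by gcongr; exact hC ⟨n, rfl⟩

theorem IsConvergent.summable_primitive (ha : IsConvergent a) (x : ℝ) :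
    Summable fun n : ℕ => a n * x ^ (n + 1) / ((n : ℝ) + 1) := by
  refine .of_norm_bounded ((ha.summable_abs_mul_pow x).mul_right |x|) fun n => ?_
  rw [Real.norm_eq_abs, abs_div, abs_mul, abs_pow, abs_of_pos (by positivity : (0 : ℝ) < n + 1),
    pow_succ, ← mul_assoc]
  exact div_le_self (by positivity) (by simp)

theorem tsum_mul_pow_sub_pow_div {u w : ℝ}
    (hw : Summable fun n : ℕ => a n * w ^ (n + 1) / ((n : ℝ) + 1))
    (hu : Summable fun n : ℕ => a n * u ^ (n + 1) / ((n : ℝ) + 1)) :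
    ∑' n : ℕ, a n * (w ^ (n + 1) - u ^ (n + 1)) / ((n : ℝ) + 1)
      = primitive a w - primitive a u := by
  simp only [mul_sub, sub_div]
  exact hw.tsum_sub hu

theorem sum_antidiagonal_shiftTerm (b v : ℝ) (k : ℕ) :
    ∑ p ∈ antidiagonal k, shiftTerm a b v p
      = a k * ((v + b) ^ (k + 1) - b ^ (k + 1)) / ((k : ℝ) + 1) := by
  calc ∑ p ∈ antidiagonal k, shiftTerm a b v p
      = ∑ p ∈ antidiagonal k,
          a k * ((k.choose p.1 : ℝ) * b ^ p.2 * v ^ (p.1 + 1) / ((p.1 : ℝ) + 1)) :=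
        sum_congr rfl fun p hp => by
          rw [shiftTerm, HasAntidiagonal.mem_antidiagonal.mp hp]; ring
    _ = _ := by rw [← mul_sum, sum_antidiagonal_choose_mul_pow_div, mul_div_assoc]

theorem abs_shiftTerm (b v : ℝ) (p : ℕ × ℕ) :
    |shiftTerm a b v p| = shiftTerm (fun n => |a n|) |b| |v| p := by
  simp only [shiftTerm, abs_div, abs_mul, abs_pow, Nat.abs_cast,
    abs_of_pos (by positivity : (0 : ℝ) < p.1 + 1)]

theorem IsConvergent.summable_shiftTerm (ha : IsConvergent a) (b v : ℝ) :
    Summable (shiftTerm a b v) := by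
  refine summable_of_summable_sum_norm_antidiagonal ?_
  simp only [Real.norm_eq_abs, abs_shiftTerm, sum_antidiagonal_shiftTerm, mul_sub, sub_div]
  exact (ha.abs.summable_primitive _).sub (ha.abs.summable_primitive _)

theorem shiftCoeff_mul_pow_div (b v : ℝ) (n : ℕ) :
    shiftCoeff a b n * v ^ (n + 1) / ((n : ℝ) + 1) = ∑' m : ℕ, shiftTerm a b v (n, m) := by
  rw [shiftCoeff, ← tsum_mul_right, ← tsum_div_const]
  exact tsum_congr fun m => by rw [shiftTerm, add_comm n m]

theorem IsConvergent.summable_shiftCoeff_primitive (ha : IsConvergent a) (b v : ℝ) :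
    Summable fun n : ℕ => shiftCoeff a b n * v ^ (n + 1) / ((n : ℝ) + 1) := by
  simpa only [shiftCoeff_mul_pow_div] using (ha.summable_shiftTerm b v).prod

theorem IsConvergent.primitive_shiftCoeff (ha : IsConvergent a) (b v : ℝ) :
    primitive (shiftCoeff a b) v = primitive a (v + b) - primitive a b := by
  have hs := ha.summable_shiftTerm b v
  calc primitive (shiftCoeff a b) v = ∑' (n : ℕ) (m : ℕ), shiftTerm a b v (n, m) :=
        tsum_congr (shiftCoeff_mul_pow_div b v)
    _ = ∑' k, ∑ p ∈ antidiagonal k, shiftTerm a b v p := by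
        rw [← hs.tsum_prod, tsum_eq_tsum_sum_antidiagonal hs]
    _ = ∑' k : ℕ, a k * ((v + b) ^ (k + 1) - b ^ (k + 1)) / ((k : ℝ) + 1) :=
        tsum_congr (sum_antidiagonal_shiftTerm b v)
    _ = primitive a (v + b) - primitive a b :=
        tsum_mul_pow_sub_pow_div (ha.summable_primitive _) (ha.summable_primitive _)

end

/-- For convergent `f = Σ aₙxⁿ` and `u, b ∈ ℝ`, the improper Newton integral
`∫_u^{+∞} f(x+b)` exists with value `L` if and only if the improper Newton
integral `∫_{u+b}^{+∞} f` exists with value `L`. Here the shift `f(x+b)` has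
coefficients `cₙ = Σ_{m≥n} C(m,n)·aₘ·b^{m−n}`, and a Newton integral from `u`
to `w` is the difference of the values of the formal primitive at `w` and `u`. -/
theorem improper_newton_integral_shift (a : ℕ → ℝ)
    (hconv : ∀ c : ℝ, Filter.Tendsto (fun n : ℕ => a n * c ^ n) Filter.atTop (nhds 0))
    (u b : ℝ) :
    ∀ L : ℝ,
      Filter.Tendsto
        (fun w : ℝ => ∑' n : ℕ, (∑' m : ℕ, ((m + n).choose n : ℝ) * a (m + n) * b ^ m) *
          (w ^ (n + 1) - u ^ (n + 1)) / ((n : ℝ) + 1))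
        Filter.atTop (nhds L)
      ↔ Filter.Tendsto
          (fun w : ℝ => ∑' n : ℕ, a n * (w ^ (n + 1) - (u + b) ^ (n + 1)) / ((n : ℝ) + 1))
          Filter.atTop (nhds L) := by
  intro L
  have ha : IsConvergent a := hconv
  have hshifted (w : ℝ) :
      ∑' n : ℕ, shiftCoeff a b n * (w ^ (n + 1) - u ^ (n + 1)) / ((n : ℝ) + 1)
        = primitive a (w + b) - primitive a (u + b) := by
    rw [tsum_mul_pow_sub_pow_div (ha.summable_shiftCoeff_primitive b w)
      (ha.summable_shiftCoeff_primitive b u), ha.primitive_shiftCoeff, ha.primitive_shiftCoeff,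
      sub_sub_sub_cancel_right]
  have hplain (w : ℝ) :
      ∑' n : ℕ, a n * (w ^ (n + 1) - (u + b) ^ (n + 1)) / ((n : ℝ) + 1)
        = primitive a w - primitive a (u + b) :=
    tsum_mul_pow_sub_pow_div (ha.summable_primitive w) (ha.summable_primitive (u + b))
  show Tendsto (fun w => ∑' n : ℕ, shiftCoeff a b n * (w ^ (n + 1) - u ^ (n + 1)) / (n + 1))
    atTop (𝓝 L) ↔ _
  simp only [hshifted, hplain]
  exact tendsto_comp_add_atTop_iff (f := fun w => primitive a w - primitive a (u + b)) b
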